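/- Let M be a Turing machine in Mathlib's TM0 model over a finite tape alphabet Γ and a finite state set Λ with decidable equality, started on the all-blank tape (input ε), and let N = Fintype.card Λ * Fintype.card Γ. Define the property P₁(M): 'M runs for at least 2 steps (it does not halt within its first step) and the head visits at least 2 distinct cells (the head position is nonzero after some number of steps)'. Then P₁(M) holds if and only if [M does not halt within 1 step, and there exists i ≤ N + 1 such that M has not halted within i steps and the head position after i steps is nonzero]; in particular, since the right-hand side is checkable by simulating M for at most N + 1 steps, the property P₁ is decidable. -/

import Mathlib

/-- One step of a TM0 machine, additionally tracking the net head displacement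
(`+1` for a right-move, `-1` for a left-move). -/
def stepPos {Γ Λ : Type} [Inhabited Γ] [Inhabited Λ] (M : Turing.TM0.Machine Γ Λ)
    (p : Turing.TM0.Cfg Γ Λ × ℤ) : Option (Turing.TM0.Cfg Γ Λ × ℤ) :=
  (Turing.TM0.step M p.1).map fun c' =>
    (c', p.2 +
      match M p.1.q p.1.Tape.head with
      | some (_, Turing.TM0.Stmt.move Turing.Dir.left) => -1
      | some (_, Turing.TM0.Stmt.move Turing.Dir.right) => 1
      | _ => 0)

/-- Run the machine for `n` steps from configuration `c`, tracking the head
position (net displacement from the starting cell); `none` means the machine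
halted at some point within the first `n` steps. -/
def runPos {Γ Λ : Type} [Inhabited Γ] [Inhabited Λ] (M : Turing.TM0.Machine Γ Λ)
    (c : Turing.TM0.Cfg Γ Λ) : ℕ → Option (Turing.TM0.Cfg Γ Λ × ℤ)
  | 0 => some (c, 0)
  | n + 1 => (runPos M c n).bind (stepPos M)

/-- The property `P₁`: on the all-blank input, the machine runs for at least 2 steps
(it does not halt within its first step) and the head visits at least 2 distinct
cells (the head position is nonzero after some number of steps). -/
def P₁ {Γ Λ : Type} [Inhabited Γ] [Inhabited Λ] (M : Turing.TM0.Machine Γ Λ) : Prop :=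
  Turing.TM0.step M (Turing.TM0.init ([] : List Γ)) ≠ none ∧
  ∃ (i : ℕ) (p : Turing.TM0.Cfg Γ Λ × ℤ),
    runPos M (Turing.TM0.init ([] : List Γ)) i = some p ∧ p.2 ≠ 0

/-!
Let `i₀` be the first step at which the head is off its starting cell. Before `i₀` the machine
has only rewritten the cell under the head, so each of those configurations is the starting
tape with its head cell overwritten, and is determined by its state and head symbol. If `i₀`
exceeded `card Λ * card Γ`, two of them would coincide, at steps `a < b`; the run is then
periodic from `a` on, so it already reaches the configuration of step `i₀` at step
`i₀ - (b - a) < i₀`, contradicting minimality.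
-/

open Turing TM0

section

variable {Γ Λ : Type} [Inhabited Γ] [Inhabited Λ] (M : Machine Γ Λ) (c : Cfg Γ Λ)

theorem exists_runPos_eq_some_of_le {i n : ℕ} {p : Cfg Γ Λ × ℤ} (h : runPos M c n = some p)
    (hi : i ≤ n) : ∃ q, runPos M c i = some q := by
  induction n, hi using Nat.le_induction generalizing p with
  | base => exact ⟨p, h⟩
  | succ n _ ih =>
    obtain ⟨q, hq, -⟩ := Option.bind_eq_some_iff.1 h
    exact ih hq

theorem runPos_add_congr {a b : ℕ} (h : runPos M c a = runPos M c b) (m : ℕ) :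
    runPos M c (a + m) = runPos M c (b + m) := by
  induction m with
  | zero => exact h
  | succ m ih => rw [← add_assoc, ← add_assoc, runPos, runPos, ih]

theorem stepPos_tape_eq_write {p p' : Cfg Γ Λ × ℤ} (h : stepPos M p = some p')
    (hz : p'.2 = p.2) : p'.1.Tape = p.1.Tape.write p'.1.Tape.head := by
  obtain ⟨⟨q, T⟩, z⟩ := p
  obtain ⟨c', hc', rfl⟩ := Option.map_eq_some_iff.1 h
  simp only [step] at hc' hz
  cases hM : M q T.head with
  | none => simp [hM] at hc'
  | some x =>
    obtain ⟨q', s | a⟩ := x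
    · cases s <;> simp [hM] at hz
    · simp only [hM, Option.map_some, Option.some_inj] at hc'
      subst hc'
      rfl

theorem runPos_tape_eq_write {n : ℕ}
    (hz : ∀ j ≤ n, ∀ p : Cfg Γ Λ × ℤ, runPos M c j = some p → p.2 = 0) {p : Cfg Γ Λ × ℤ}
    (h : runPos M c n = some p) : p.1.Tape = c.Tape.write p.1.Tape.head := by
  induction n generalizing p with
  | zero =>
    obtain rfl := Option.some_inj.1 h
    exact (Tape.write_self _).symm
  | succ n ih =>
    obtain ⟨p', hp', hstep⟩ := Option.bind_eq_some_iff.1 h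
    have hz' : ∀ j ≤ n, ∀ q : Cfg Γ Λ × ℤ, runPos M c j = some q → q.2 = 0 :=
      fun j hj => hz j (Nat.le_succ_of_le hj)
    have hstill : p.2 = p'.2 := by rw [hz _ le_rfl p h, hz' _ le_rfl p' hp']
    rw [stepPos_tape_eq_write M hstep hstill, ih hz' hp']
    rfl

theorem eq_of_runPos_of_q_eq_of_head_eq {a b : ℕ} {pa pb : Cfg Γ Λ × ℤ}
    (hz : ∀ j ≤ max a b, ∀ p : Cfg Γ Λ × ℤ, runPos M c j = some p → p.2 = 0)
    (ha : runPos M c a = some pa) (hb : runPos M c b = some pb)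
    (hq : pa.1.q = pb.1.q) (hhead : pa.1.Tape.head = pb.1.Tape.head) : pa = pb := by
  have hTa := runPos_tape_eq_write M c (fun j hj => hz j (hj.trans (le_max_left a b))) ha
  have hTb := runPos_tape_eq_write M c (fun j hj => hz j (hj.trans (le_max_right a b))) hb
  obtain ⟨⟨qa, Ta⟩, za⟩ := pa
  obtain ⟨⟨qb, Tb⟩, zb⟩ := pb
  obtain rfl : za = 0 := hz a (le_max_left a b) _ ha
  obtain rfl : zb = 0 := hz b (le_max_right a b) _ hb
  simp only at hq hhead hTa hTb
  subst hq
  rw [hTa, hTb, hhead]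

theorem exists_le_card_runPos_snd_ne_zero [Fintype Γ] [Fintype Λ] {n : ℕ}
    {p : Cfg Γ Λ × ℤ} (h : runPos M c n = some p) (hp : p.2 ≠ 0) :
    ∃ i ≤ Fintype.card Λ * Fintype.card Γ, ∃ p : Cfg Γ Λ × ℤ, runPos M c i = some p ∧ p.2 ≠ 0 := by
  classical
  have hex : ∃ n, ∃ p : Cfg Γ Λ × ℤ, runPos M c n = some p ∧ p.2 ≠ 0 := ⟨n, p, h, hp⟩
  obtain ⟨p₀, h₀, hp₀⟩ := Nat.find_spec hex
  set i₀ := Nat.find hex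
  have hz : ∀ j < i₀, ∀ q : Cfg Γ Λ × ℤ, runPos M c j = some q → q.2 = 0 :=
    fun j hj q hq => by_contra fun hne => Nat.find_min hex hj ⟨q, hq, hne⟩
  refine ⟨i₀, ?_, p₀, h₀, hp₀⟩
  by_contra! hlarge
  choose! cfgAt hcfgAt using
    fun j (hj : j < i₀) => exists_runPos_eq_some_of_le M c h₀ hj.le
  obtain ⟨a, ha, b, hb, hab, hkey⟩ := Finset.exists_ne_map_eq_of_card_lt_of_maps_to
    (s := Finset.range i₀) (t := (Finset.univ : Finset (Λ × Γ)))
    (f := fun j => ((cfgAt j).1.q, (cfgAt j).1.Tape.head))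
    (by simpa [Fintype.card_prod] using hlarge) (by simp)
  rw [Finset.mem_range] at ha hb
  wlog hab' : a < b generalizing a b
  · exact this b hb a ha hab.symm hkey.symm (by omega)
  have hrepeat : runPos M c a = runPos M c b := by
    rw [hcfgAt a ha, hcfgAt b hb, eq_of_runPos_of_q_eq_of_head_eq M c
      (fun j hj => hz j (by omega)) (hcfgAt a ha) (hcfgAt b hb) (congrArg Prod.fst hkey)
      (congrArg Prod.snd hkey)]
  have hearly := runPos_add_congr M c hrepeat (i₀ - b)
  rw [Nat.add_sub_cancel' hb.le, h₀] at hearly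
  exact Nat.find_min hex (show a + (i₀ - b) < i₀ by omega) ⟨p₀, hearly, hp₀⟩

end

theorem P₁_iff_boundedCheck_general {Γ Λ : Type} [Inhabited Γ] [Inhabited Λ]
    [Fintype Γ] [Fintype Λ]
    (M : Turing.TM0.Machine Γ Λ) :
    P₁ M ↔
      (Turing.TM0.step M (Turing.TM0.init ([] : List Γ)) ≠ none ∧
        ∃ i ≤ Fintype.card Λ * Fintype.card Γ + 1,
          ∃ p : Turing.TM0.Cfg Γ Λ × ℤ,
            runPos M (Turing.TM0.init ([] : List Γ)) i = some p ∧ p.2 ≠ 0) := by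
  constructor
  · rintro ⟨hstep, i, p, hi, hp⟩
    obtain ⟨j, hj, q, hq, hq0⟩ := exists_le_card_runPos_snd_ne_zero M _ hi hp
    exact ⟨hstep, j, by omega, q, hq, hq0⟩
  · rintro ⟨hstep, i, -, p, hi, hp⟩
    exact ⟨hstep, i, p, hi, hp⟩

/-- `P₁ M` holds iff `M` does not halt within 1 step and there is an `i ≤ card Λ * card Γ + 1`
at which `M` has not halted and the head position is nonzero; the right-hand side
is checkable by simulating `M` for at most `card Λ * card Γ + 1` steps, so `P₁` is decidable. -/
theorem P₁_iff_boundedCheck {Γ Λ : Type} [Inhabited Γ] [Inhabited Λ]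
    [Fintype Γ] [Fintype Λ] [DecidableEq Γ] [DecidableEq Λ]
    (M : Turing.TM0.Machine Γ Λ) :
    P₁ M ↔
      (Turing.TM0.step M (Turing.TM0.init ([] : List Γ)) ≠ none ∧
        ∃ i ≤ Fintype.card Λ * Fintype.card Γ + 1,
          ∃ p : Turing.TM0.Cfg Γ Λ × ℤ,
            runPos M (Turing.TM0.init ([] : List Γ)) i = some p ∧ p.2 ≠ 0) :=
  P₁_iff_boundedCheck_general M
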